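/- arXiv:2207.08238 — 3 statements merged into one kernel-verified Lean document; each statement's English description precedes it below -/
import Mathlib

section
/- Suppose μ ∈ 𝔐_x(M) extension dominates ν ∈ 𝔐_y(M) over A and λ ∈ 𝔐_xy(A) witnesses the domination. Then for every D ∈ L_y(M) and every ε > 0, there exist sets G_ε⁻, G_ε⁺ ∈ 𝔹_xy(A), independent of ω, such that: (1) G_ε⁻ ⊆ M^x × D ⊆ G_ε⁺; (2) for every ω ∈ E(λ,μ), ω(G_ε⁺) − ω(G_ε⁻) < ε; and (3) for every ω ∈ E(λ,μ), |ω(G_ε⁻) − ν(D)| < ε and |ω(G_ε⁺) − ν(D)| < ε. -/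
open FirstOrder

/-- A Keisler measure over the parameter set `A`, in the variables indexed by `α`:
a finitely additive probability measure on the Boolean algebra of `A`-definable
subsets of `M^α` (i.e. on `L_α(A)`).  The function `toFun` is defined on all sets,
but only its values on `A`-definable sets are constrained (and relevant). -/
structure KeislerMeasure (L : FirstOrder.Language) (M : Type*) [L.Structure M]
    (A : Set M) (α : Type*) where
  toFun : Set (α → M) → ℝ
  measure_univ : toFun Set.univ = 1
  nonneg' : ∀ s : Set (α → M), A.Definable L s → 0 ≤ toFun s
  compl' : ∀ s : Set (α → M), A.Definable L s → toFun sᶜ = 1 - toFun s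
  union_inter' : ∀ s t : Set (α → M), A.Definable L s → A.Definable L t →
    toFun (s ∪ t) = toFun s + toFun t - toFun (s ∩ t)

/-- Pull back a set of variable assignments along a variable reindexing map:
for `S ⊆ M^α` and `f : α → β`, `cyl f S ⊆ M^β` is the corresponding cylinder.
E.g. `cyl Sum.inl X = X × M^β` inside `M^(α ⊕ β)`. -/
def cyl {M : Type*} {α β : Type*} (f : α → β) (S : Set (α → M)) : Set (β → M) :=
  {g : β → M | (fun a => g (f a)) ∈ S}

/-- The product `X × Y` of a set in variables `α` and a set in variables `β`,
viewed inside the variables `α ⊕ β`. -/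
def prodSet {M : Type*} {α β : Type*} (X : Set (α → M)) (Y : Set (β → M)) :
    Set (α ⊕ β → M) :=
  cyl Sum.inl X ∩ cyl Sum.inr Y

/-- The extension space `E(λ, μ)`: all global Keisler measures `ω` in the
variables `α ⊕ β` whose restriction to `A`-definable sets is `λ` and whose
marginal `π_α(ω)` is `μ`. -/
def extSpace (L : FirstOrder.Language) {M : Type*} [L.Structure M] (A : Set M)
    {α β : Type*} (lam : KeislerMeasure L M A (α ⊕ β))
    (mu : KeislerMeasure L M (Set.univ : Set M) α) :
    Set (KeislerMeasure L M (Set.univ : Set M) (α ⊕ β)) :=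
  {om | (∀ s : Set (α ⊕ β → M), A.Definable L s → om.toFun s = lam.toFun s) ∧
    (∀ X : Set (α → M), (Set.univ : Set M).Definable L X →
      om.toFun (cyl Sum.inl X) = mu.toFun X)}

/-- `μ` extension dominates `ν` over `A` (written `μ ≥_{E,A} ν`): there is
`λ ∈ 𝔐_{αβ}(A)` with `π_α(λ) = μ|_A` such that `π_β(ω) = ν` for every
`ω ∈ E(λ, μ)`. -/
def ExtDomOver (L : FirstOrder.Language) {M : Type*} [L.Structure M] (A : Set M)
    {α β : Type*} (mu : KeislerMeasure L M (Set.univ : Set M) α)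
    (nu : KeislerMeasure L M (Set.univ : Set M) β) : Prop :=
  ∃ lam : KeislerMeasure L M A (α ⊕ β),
    (∀ X : Set (α → M), A.Definable L X →
      lam.toFun (cyl Sum.inl X) = mu.toFun X) ∧
    ∀ om ∈ extSpace L A lam mu, ∀ Y : Set (β → M),
      (Set.univ : Set M).Definable L Y → om.toFun (cyl Sum.inr Y) = nu.toFun Y

/-- The Boolean subalgebra `𝔹_{αβ}(A)` of `L_{αβ}(M)` generated by the cylinders
`X × M^β` for globally definable `X ∈ L_α(M)` together with all `A`-definable sets
in `L_{αβ}(A)`. -/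
inductive BAlg (L : FirstOrder.Language) (M : Type*) [L.Structure M] (A : Set M)
    (α β : Type*) : Set (α ⊕ β → M) → Prop
  | cylinder (X : Set (α → M)) (hX : (Set.univ : Set M).Definable L X) :
      BAlg L M A α β (cyl Sum.inl X)
  | base (S : Set (α ⊕ β → M)) (hS : A.Definable L S) : BAlg L M A α β S
  | compl (S : Set (α ⊕ β → M)) : BAlg L M A α β S → BAlg L M A α β Sᶜ
  | union (S T : Set (α ⊕ β → M)) :
      BAlg L M A α β S → BAlg L M A α β T → BAlg L M A α β (S ∪ T)

/-!
The argument is Hahn–Banach plus compactness. Integrals of simple functions over the algebra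
`𝔹 = 𝔹_{αβ}(A)` are positive, and a case split on the sign of `t` shows that so is
`f ↦ ∫ f dω + t · ω_*(T)` on simple functions `f + t·1_T`, where `ω_*` is the `𝔹`-inner measure.
The M. Riesz extension theorem then re-extends any `ω ∈ E(λ, μ)` from `𝔹` to a point of
`E(λ, μ)` giving `T` its inner measure. If no `G ∈ 𝔹` inside `M^α × D` satisfied
`ω(G) > ν(D) - ε` for all `ω ∈ E(λ, μ)`, an ultralimit along the directed family of such `G`
would give one `ω ∈ E(λ, μ)` with `ω_*(M^α × D) ≤ ν(D) - ε`, and its re-extension would have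
`β`-marginal different from `ν`. Applying this to `D` and to `Dᶜ` gives `G⁻` and `G⁺`.
-/

open MeasureTheory Set Filter Topology

theorem MeasureTheory.IsSetAlgebra.setOf_add_sum_indicator_mem {X : Type*}
    {𝒜 : Set (Set X)} (h𝒜 : IsSetAlgebra 𝒜) (s : Finset (Set X)) (hs : ∀ S ∈ s, S ∈ 𝒜)
    (c : Set X → ℝ) (a : ℝ) (U : Set ℝ) :
    {x | a + ∑ S ∈ s, c S * S.indicator 1 x ∈ U} ∈ 𝒜 := by
  classical
  induction s using Finset.induction_on generalizing a with
  | empty => by_cases ha : a ∈ U <;> simp [ha, h𝒜.univ_mem, h𝒜.empty_mem]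
  | insert D s hDs ih =>
    have hD := hs D (s.mem_insert_self D)
    have hs' := fun S hS => hs S (Finset.mem_insert_of_mem hS)
    have hsplit : {x | a + ∑ S ∈ insert D s, c S * S.indicator 1 x ∈ U} =
        D ∩ {x | a + c D + ∑ S ∈ s, c S * S.indicator 1 x ∈ U} ∪
          Dᶜ ∩ {x | a + ∑ S ∈ s, c S * S.indicator 1 x ∈ U} := by
      ext x
      by_cases hx : x ∈ D <;> simp [Finset.sum_insert hDs, hx, add_assoc]
    rw [hsplit]
    exact h𝒜.union_mem (h𝒜.inter_mem hD (ih hs' _)) (h𝒜.inter_mem (h𝒜.compl_mem hD) (ih hs' _))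

noncomputable def indicatorCombination (X : Type*) : (Set X →₀ ℝ) →ₗ[ℝ] (X → ℝ) :=
  Finsupp.linearCombination ℝ fun S => S.indicator 1

theorem indicatorCombination_apply {X : Type*} (v : Set X →₀ ℝ) (x : X) :
    indicatorCombination X v x = ∑ S ∈ v.support, v S * S.indicator 1 x := by
  simp [indicatorCombination, Finsupp.linearCombination_apply, Finsupp.sum]

theorem indicatorCombination_single {X : Type*} (S : Set X) (c : ℝ) :
    indicatorCombination X (Finsupp.single S c) = c • S.indicator 1 := by
  simp [indicatorCombination]

theorem eq_of_indicatorCombination_eq {X : Type*} {g : (Set X →₀ ℝ) →ₗ[ℝ] ℝ}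
    (hg : ∀ v, 0 ≤ indicatorCombination X v → 0 ≤ g v) {v w : Set X →₀ ℝ}
    (h : indicatorCombination X v = indicatorCombination X w) : g v = g w := by
  have h1 := hg (v - w) (by rw [map_sub, h, sub_self])
  have h2 := hg (w - v) (by rw [map_sub, h, sub_self])
  rw [map_sub] at h1 h2
  linarith

theorem indicatorCombination_add_single_univ_nonneg {X : Type*} (v : Set X →₀ ℝ) :
    0 ≤ indicatorCombination X (v + Finsupp.single univ (∑ S ∈ v.support, |v S|)) := by
  intro x
  have hterm : ∀ S ∈ v.support, -|v S| ≤ v S * S.indicator 1 x := fun S _ => by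
    by_cases hx : x ∈ S <;> simp [hx, neg_abs_le]
  have := Finset.sum_le_sum hterm
  rw [Finset.sum_neg_distrib] at this
  rw [map_add, indicatorCombination_single, Pi.add_apply, indicatorCombination_apply]
  simp only [Pi.smul_apply, indicator_univ, Pi.one_apply, smul_eq_mul, mul_one, Pi.zero_apply]
  linarith

namespace KeislerMeasure

variable {L : FirstOrder.Language} {M : Type*} [L.Structure M] {B : Set M} {γ : Type*}
  (K : KeislerMeasure L M B γ) {𝒜 : Set (Set (γ → M))}

theorem empty : K.toFun ∅ = 0 := by
  have h := K.compl' univ definable_univ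
  rw [compl_univ, K.measure_univ, sub_self] at h
  exact h

theorem le_one {S : Set (γ → M)} (hS : B.Definable L S) : K.toFun S ≤ 1 := by
  linarith [K.compl' S hS, K.nonneg' Sᶜ hS.compl]

theorem inter_add_inter_compl {S C : Set (γ → M)} (hS : B.Definable L S)
    (hC : B.Definable L C) : K.toFun (S ∩ C) + K.toFun (S ∩ Cᶜ) = K.toFun S := by
  have h := K.union_inter' _ _ (hS.inter hC) (hS.inter hC.compl)
  rw [inter_union_compl, inter_inter_inter_comm, inter_compl_self, inter_empty, K.empty] at h
  linarith

theorem mono {S T : Set (γ → M)} (hS : B.Definable L S) (hT : B.Definable L T) (hST : S ⊆ T) :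
    K.toFun S ≤ K.toFun T := by
  rw [← K.inter_add_inter_compl hT hS, inter_eq_right.2 hST]
  linarith [K.nonneg' _ (hT.inter hS.compl)]

-- The constant `a` and the relativisation to `C` are what make the induction on `s` go through.
theorem sum_mul_inter_nonneg (s : Finset (Set (γ → M))) (hs : ∀ S ∈ s, B.Definable L S)
    (c : Set (γ → M) → ℝ) {a : ℝ} {C : Set (γ → M)} (hC : B.Definable L C)
    (h : ∀ x ∈ C, 0 ≤ a + ∑ S ∈ s, c S * S.indicator 1 x) :
    0 ≤ a * K.toFun C + ∑ S ∈ s, c S * K.toFun (S ∩ C) := by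
  classical
  induction s using Finset.induction_on generalizing a C with
  | empty =>
    rcases C.eq_empty_or_nonempty with rfl | ⟨x, hx⟩
    · simp [K.empty]
    · simpa using mul_nonneg (by simpa using h x hx) (K.nonneg' C hC)
  | insert D s hDs ih =>
    have hD := hs D (s.mem_insert_self D)
    have hs' := fun S hS => hs S (Finset.mem_insert_of_mem hS)
    have hin := ih hs' (a := a + c D) (hC.inter hD) fun x hx => by
      simpa [Finset.sum_insert hDs, hx.2, add_assoc] using h x hx.1
    have hout := ih hs' (a := a) (hC.inter hD.compl) fun x hx => by
      simpa [Finset.sum_insert hDs, indicator_of_notMem hx.2] using h x hx.1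
    have hsplit : ∀ S ∈ s, c S * K.toFun (S ∩ C) =
        c S * K.toFun (S ∩ (C ∩ D)) + c S * K.toFun (S ∩ (C ∩ Dᶜ)) := fun S hS => by
      rw [← mul_add, ← inter_assoc, ← inter_assoc,
        K.inter_add_inter_compl ((hs' S hS).inter hC) hD]
    rw [Finset.sum_insert hDs, Finset.sum_congr rfl hsplit, Finset.sum_add_distrib,
      ← K.inter_add_inter_compl hC hD, inter_comm D C]
    linarith

noncomputable def innerMeasure (𝒜 : Set (Set (γ → M))) (T : Set (γ → M)) : ℝ :=
  sSup (K.toFun '' {G ∈ 𝒜 | G ⊆ T})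

theorem le_innerMeasure (h𝒜B : ∀ S ∈ 𝒜, B.Definable L S) {G T : Set (γ → M)} (hG : G ∈ 𝒜)
    (hGT : G ⊆ T) :
    K.toFun G ≤ K.innerMeasure 𝒜 T :=
  le_csSup ⟨1, forall_mem_image.2 fun S hS => K.le_one (h𝒜B S hS.1)⟩ ⟨G, ⟨hG, hGT⟩, rfl⟩

theorem innerMeasure_le (h𝒜 : IsSetAlgebra 𝒜) {T : Set (γ → M)} {b : ℝ}
    (hb : ∀ G ∈ 𝒜, G ⊆ T → K.toFun G ≤ b) : K.innerMeasure 𝒜 T ≤ b :=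
  csSup_le ⟨_, ⟨∅, ⟨h𝒜.empty_mem, empty_subset T⟩, rfl⟩⟩
    (forall_mem_image.2 fun G hG => hb G hG.1 hG.2)

theorem innerMeasure_eq_of_mem (h𝒜 : IsSetAlgebra 𝒜) (h𝒜B : ∀ S ∈ 𝒜, B.Definable L S)
    {T : Set (γ → M)} (hT : T ∈ 𝒜) : K.innerMeasure 𝒜 T = K.toFun T :=
  le_antisymm (K.innerMeasure_le h𝒜 fun _ hG hGT => K.mono (h𝒜B _ hG) (h𝒜B T hT) hGT)
    (K.le_innerMeasure h𝒜B hT subset_rfl)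

theorem sum_mul_add_mul_innerMeasure_nonneg (h𝒜 : IsSetAlgebra 𝒜)
    (h𝒜B : ∀ S ∈ 𝒜, B.Definable L S) (s : Finset (Set (γ → M))) (hs : ∀ S ∈ s, S ∈ 𝒜)
    (c : Set (γ → M) → ℝ) (T : Set (γ → M)) (t : ℝ)
    (h : ∀ x, 0 ≤ ∑ S ∈ s, c S * S.indicator 1 x + t * T.indicator 1 x) :
    0 ≤ ∑ S ∈ s, c S * K.toFun S + t * K.innerMeasure 𝒜 T := by
  set f : (γ → M) → ℝ := fun x => ∑ S ∈ s, c S * S.indicator 1 x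
  have hsB : ∀ S ∈ s, B.Definable L S := fun S hS => h𝒜B S (hs S hS)
  have split : ∀ G ∈ 𝒜, (∀ x ∈ G, 0 ≤ t + f x) → (∀ x ∉ G, 0 ≤ f x) →
      0 ≤ ∑ S ∈ s, c S * K.toFun S + t * K.toFun G := by
    intro G hG hin hout
    have hGB := h𝒜B G hG
    have h1 := K.sum_mul_inter_nonneg s hsB c hGB hin
    have h2 := K.sum_mul_inter_nonneg s hsB c (a := 0) hGB.compl fun x hx => by
      simpa using hout x hx
    have hsum : ∑ S ∈ s, c S * K.toFun S = ∑ S ∈ s, c S * K.toFun (S ∩ G) +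
        ∑ S ∈ s, c S * K.toFun (S ∩ Gᶜ) := by
      rw [← Finset.sum_add_distrib]
      exact Finset.sum_congr rfl fun S hS => by
        rw [← mul_add, K.inter_add_inter_compl (hsB S hS) hGB]
    linarith
  have hT : ∀ x ∈ T, 0 ≤ t + f x := fun x hx => by
    simpa [f, hx, add_comm] using h x
  rcases le_or_gt 0 t with ht | ht
  · have hG : {x | 0 + f x ∈ Iio 0} ∈ 𝒜 := h𝒜.setOf_add_sum_indicator_mem s hs c 0 _
    simp only [zero_add, mem_Iio] at hG
    have hGT : {x | f x < 0} ⊆ T := fun x hx => by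
      by_contra hxT
      have := h x
      simp only [indicator_of_notMem hxT, mul_zero, add_zero] at this
      exact absurd hx (not_lt.2 this)
    have := split _ hG (fun x hx => hT x (hGT hx)) fun x hx => not_lt.1 hx
    nlinarith [K.le_innerMeasure h𝒜B hG hGT]
  · have hf : ∀ x, 0 ≤ f x := fun x => by
      have := h x
      have : 0 ≤ T.indicator (1 : (γ → M) → ℝ) x := indicator_nonneg (fun _ _ => zero_le_one) x
      nlinarith
    have hle : K.innerMeasure 𝒜 T ≤ (∑ S ∈ s, c S * K.toFun S) / -t :=
      K.innerMeasure_le h𝒜 fun G hG hGT => by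
        rw [le_div_iff₀ (neg_pos.2 ht)]
        linarith [split G hG (fun x hx => hT x (hGT hx)) fun x _ => hf x]
    rw [le_div_iff₀ (neg_pos.2 ht)] at hle
    linarith

noncomputable def ofFunctional (g : (Set (γ → M) →₀ ℝ) →ₗ[ℝ] ℝ)
    (hg : ∀ v, 0 ≤ indicatorCombination (γ → M) v → 0 ≤ g v)
    (huniv : g (Finsupp.single univ 1) = 1) : KeislerMeasure L M B γ where
  toFun S := g (Finsupp.single S 1)
  measure_univ := huniv
  nonneg' S _ := hg _ fun x => by
    simp [indicatorCombination_single, indicator_nonneg]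
  compl' S _ :=
    calc g (Finsupp.single Sᶜ 1) = g (Finsupp.single univ 1 - Finsupp.single S 1) :=
          eq_of_indicatorCombination_eq hg (by
            simp only [map_sub, indicatorCombination_single, one_smul, indicator_compl,
              indicator_univ])
      _ = 1 - g (Finsupp.single S 1) := by rw [map_sub, huniv]
  union_inter' S T _ _ := by
    rw [← map_add, ← map_sub]
    refine eq_of_indicatorCombination_eq hg ?_
    simp only [map_sub, map_add, indicatorCombination_single, one_smul]
    rw [eq_sub_iff_add_eq, indicator_union_add_inter]

theorem linearCombination_innerMeasure_nonneg (h𝒜 : IsSetAlgebra 𝒜)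
    (h𝒜B : ∀ S ∈ 𝒜, B.Definable L S) {T : Set (γ → M)} {v : Set (γ → M) →₀ ℝ}
    (hv : v ∈ Finsupp.supported ℝ ℝ (insert T 𝒜)) (hpos : 0 ≤ indicatorCombination _ v) :
    0 ≤ Finsupp.linearCombination ℝ (K.innerMeasure 𝒜) v := by
  have hs : ∀ S ∈ (v.erase T).support, S ∈ 𝒜 := fun S hS => by
    rw [Finsupp.support_erase, Finset.mem_erase] at hS
    exact (hv hS.2).resolve_left hS.1
  rw [← Finsupp.erase_add_single T v] at hpos ⊢
  rw [map_add, indicatorCombination_single] at hpos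
  rw [map_add, Finsupp.linearCombination_single, Finsupp.linearCombination_apply, Finsupp.sum,
    Finset.sum_congr rfl fun S hS => by rw [K.innerMeasure_eq_of_mem h𝒜 h𝒜B (hs S hS)],
    smul_eq_mul]
  refine K.sum_mul_add_mul_innerMeasure_nonneg h𝒜 h𝒜B _ hs _ T _ fun x => ?_
  simpa [indicatorCombination_apply, indicatorCombination_single] using hpos x

theorem exists_extension_innerMeasure (h𝒜 : IsSetAlgebra 𝒜)
    (h𝒜B : ∀ S ∈ 𝒜, B.Definable L S) (T : Set (γ → M)) :
    ∃ K' : KeislerMeasure L M B γ,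
      (∀ S ∈ 𝒜, K'.toFun S = K.toFun S) ∧ K'.toFun T = K.innerMeasure 𝒜 T := by
  let f : (Set (γ → M) →₀ ℝ) →ₗ.[ℝ] ℝ :=
    ⟨Finsupp.supported ℝ ℝ (insert T 𝒜),
      (Finsupp.linearCombination ℝ (K.innerMeasure 𝒜)).domRestrict _⟩
  have huniv : ∀ c, Finsupp.single univ c ∈ f.domain := fun c =>
    Finsupp.single_mem_supported ℝ c (mem_insert_of_mem T h𝒜.univ_mem)
  obtain ⟨g, hgf, hg⟩ := riesz_extension
    ((PointedCone.positive ℝ _).comap (indicatorCombination (γ → M))) f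
    (fun v hv => K.linearCombination_innerMeasure_nonneg h𝒜 h𝒜B v.2 hv)
    (fun y => ⟨⟨_, huniv _⟩, by
      rw [add_comm]
      exact indicatorCombination_add_single_univ_nonneg y⟩)
  have hgI : ∀ S ∈ insert T 𝒜, g (Finsupp.single S 1) = K.innerMeasure 𝒜 S := fun S hS => by
    rw [hgf ⟨_, Finsupp.single_mem_supported ℝ 1 hS⟩]
    simp [f]
  have hgK : ∀ S ∈ 𝒜, g (Finsupp.single S 1) = K.toFun S := fun S hS => by
    rw [hgI S (mem_insert_of_mem T hS), K.innerMeasure_eq_of_mem h𝒜 h𝒜B hS]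
  refine ⟨ofFunctional g (fun v hv => hg v hv) ((hgK univ h𝒜.univ_mem).trans K.measure_univ),
    hgK, hgI T (mem_insert T 𝒜)⟩

theorem exists_tendsto_ultrafilter {ι : Type*} (U : Ultrafilter ι)
    (Ks : ι → KeislerMeasure L M B γ) :
    ∃ K' : KeislerMeasure L M B γ, ∀ S, B.Definable L S →
      Tendsto (fun i => (Ks i).toFun S) U (𝓝 (K'.toFun S)) := by
  have h : ∀ S, B.Definable L S →
      Tendsto (fun i => (Ks i).toFun S) U (𝓝 (limUnder U fun i => (Ks i).toFun S)) := by
    refine fun S hS => tendsto_nhds_limUnder ?_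
    obtain ⟨a, -, ha⟩ := isCompact_Icc.ultrafilter_le_nhds (U.map fun i => (Ks i).toFun S)
      (le_principal_iff.2 (mem_map.2 (univ_mem' fun i => ⟨(Ks i).nonneg' S hS, (Ks i).le_one hS⟩)))
    exact ⟨a, ha⟩
  refine ⟨{ toFun := fun S => limUnder U fun i => (Ks i).toFun S,
             measure_univ := ?_, nonneg' := ?_, compl' := ?_, union_inter' := ?_ }, h⟩
  · exact tendsto_nhds_unique (h univ definable_univ) (by simp [measure_univ])
  · exact fun S hS => ge_of_tendsto' (h S hS) fun i => (Ks i).nonneg' S hS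
  · refine fun S hS => tendsto_nhds_unique (h Sᶜ hS.compl) ?_
    simpa [(Ks _).compl' S hS] using (h S hS).const_sub 1
  · refine fun S T hS hT => tendsto_nhds_unique (h _ (hS.union hT)) ?_
    simpa [(Ks _).union_inter' S T hS hT] using ((h S hS).add (h T hT)).sub (h _ (hS.inter hT))

end KeislerMeasure

theorem BAlg.definable {L : FirstOrder.Language} {M : Type*} [L.Structure M] {A : Set M}
    {α β : Type*} {S : Set (α ⊕ β → M)} (h : BAlg L M A α β S) :
    (univ : Set M).Definable L S := by
  induction h with
  | cylinder X hX => exact hX.preimage_comp Sum.inl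
  | base S hS => exact hS.mono (subset_univ A)
  | compl S _ ih => exact ih.compl
  | union S T _ _ ihS ihT => exact ihS.union ihT

theorem BAlg.isSetAlgebra {L : FirstOrder.Language} {M : Type*} [L.Structure M] {A : Set M}
    {α β : Type*} : IsSetAlgebra {S | BAlg L M A α β S} :=
  ⟨BAlg.base ∅ definable_empty, BAlg.compl, BAlg.union⟩

section extSpace

variable {L : FirstOrder.Language} {M : Type*} [L.Structure M] {A : Set M} {α β : Type*}
  {lam : KeislerMeasure L M A (α ⊕ β)} {mu : KeislerMeasure L M univ α}
  {nu : KeislerMeasure L M univ β}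

theorem mem_extSpace_of_tendsto {ι : Type*} {l : Filter ι} [l.NeBot]
    {om : ι → KeislerMeasure L M univ (α ⊕ β)} (hom : ∀ i, om i ∈ extSpace L A lam mu)
    {om' : KeislerMeasure L M univ (α ⊕ β)}
    (h : ∀ S, (univ : Set M).Definable L S →
      Tendsto (fun i => (om i).toFun S) l (𝓝 (om'.toFun S))) :
    om' ∈ extSpace L A lam mu := by
  refine ⟨fun S hS => tendsto_nhds_unique (h S (hS.mono (subset_univ A))) ?_,
    fun X hX => tendsto_nhds_unique (h _ (hX.preimage_comp Sum.inl)) ?_⟩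
  · simp [(hom _).1 S hS]
  · simp [(hom _).2 X hX]

theorem exists_mem_extSpace_forall_le {𝒢 : Set (Set (α ⊕ β → M))} (hne : 𝒢.Nonempty)
    (hdir : DirectedOn (· ⊆ ·) 𝒢) (hdef : ∀ G ∈ 𝒢, (univ : Set M).Definable L G) {c : ℝ}
    (h : ∀ G ∈ 𝒢, ∃ om ∈ extSpace L A lam mu, om.toFun G ≤ c) :
    ∃ om ∈ extSpace L A lam mu, ∀ G ∈ 𝒢, om.toFun G ≤ c := by
  have : Nonempty 𝒢 := hne.to_subtype
  have : IsDirectedOrder 𝒢 := hdir.isDirectedOrder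
  choose om hom hle using fun G : 𝒢 => h G G.2
  obtain ⟨om', hlim⟩ := KeislerMeasure.exists_tendsto_ultrafilter (.of atTop) om
  refine ⟨om', mem_extSpace_of_tendsto hom hlim, fun G₀ hG₀ =>
    le_of_tendsto (hlim G₀ (hdef G₀ hG₀)) ?_⟩
  filter_upwards [Ultrafilter.of_le atTop (eventually_ge_atTop ⟨G₀, hG₀⟩)] with G hG
  exact ((om G).mono (hdef _ hG₀) (hdef _ G.2) hG).trans (hle G)

theorem exists_BAlg_inner_approx
    (hwit : ∀ om ∈ extSpace L A lam mu, ∀ Y : Set (β → M),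
      (univ : Set M).Definable L Y → om.toFun (cyl Sum.inr Y) = nu.toFun Y)
    {D : Set (β → M)} (hD : (univ : Set M).Definable L D) {ε : ℝ} (hε : 0 < ε) :
    ∃ G, BAlg L M A α β G ∧ G ⊆ cyl Sum.inr D ∧
      ∀ om ∈ extSpace L A lam mu, nu.toFun D - ε < om.toFun G := by
  by_contra! hcon
  obtain ⟨om, hom, hle⟩ :=
    exists_mem_extSpace_forall_le (𝒢 := {G | BAlg L M A α β G ∧ G ⊆ cyl Sum.inr D})
    ⟨∅, BAlg.isSetAlgebra.empty_mem, empty_subset _⟩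
    (fun G hG G' hG' => ⟨G ∪ G', ⟨BAlg.union _ _ hG.1 hG'.1, union_subset hG.2 hG'.2⟩,
      subset_union_left, subset_union_right⟩)
    (fun G hG => hG.1.definable) fun G hG => hcon G hG.1 hG.2
  obtain ⟨om', hagree, hinner⟩ :=
    om.exists_extension_innerMeasure BAlg.isSetAlgebra (fun _ hS => hS.definable) (cyl Sum.inr D)
  have hom' : om' ∈ extSpace L A lam mu :=
    ⟨fun S hS => (hagree S (BAlg.base S hS)).trans (hom.1 S hS),
      fun X hX => (hagree _ (BAlg.cylinder X hX)).trans (hom.2 X hX)⟩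
  have := om.innerMeasure_le BAlg.isSetAlgebra fun G hG hGD => hle G ⟨hG, hGD⟩
  linarith [hwit om' hom' D hD]

theorem exists_BAlg_outer_approx
    (hwit : ∀ om ∈ extSpace L A lam mu, ∀ Y : Set (β → M),
      (univ : Set M).Definable L Y → om.toFun (cyl Sum.inr Y) = nu.toFun Y)
    {D : Set (β → M)} (hD : (univ : Set M).Definable L D) {ε : ℝ} (hε : 0 < ε) :
    ∃ G, BAlg L M A α β G ∧ cyl Sum.inr D ⊆ G ∧
      ∀ om ∈ extSpace L A lam mu, om.toFun G < nu.toFun D + ε := by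
  obtain ⟨G, hG, hGD, hlt⟩ := exists_BAlg_inner_approx hwit hD.compl hε
  refine ⟨Gᶜ, BAlg.compl G hG, subset_compl_comm.1 hGD, fun om hom => ?_⟩
  linarith [hlt om hom, om.compl' G hG.definable, nu.compl' D hD]

end extSpace

theorem extDom_uniform_approximation_general {L : FirstOrder.Language} {M : Type*}
    [L.Structure M] (A : Set M) {α β : Type*}
    (mu : KeislerMeasure L M (Set.univ : Set M) α)
    (nu : KeislerMeasure L M (Set.univ : Set M) β)
    (lam : KeislerMeasure L M A (α ⊕ β))
    (hwit : ∀ om ∈ extSpace L A lam mu, ∀ Y : Set (β → M),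
      (Set.univ : Set M).Definable L Y → om.toFun (cyl Sum.inr Y) = nu.toFun Y) :
    ∀ D : Set (β → M), (Set.univ : Set M).Definable L D → ∀ ε : ℝ, 0 < ε →
      ∃ Gm Gp : Set (α ⊕ β → M), BAlg L M A α β Gm ∧ BAlg L M A α β Gp ∧
        Gm ⊆ cyl Sum.inr D ∧ cyl Sum.inr D ⊆ Gp ∧
        (∀ om ∈ extSpace L A lam mu, om.toFun Gp - om.toFun Gm < ε) ∧
        (∀ om ∈ extSpace L A lam mu,
          |om.toFun Gm - nu.toFun D| < ε ∧ |om.toFun Gp - nu.toFun D| < ε) := by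
  intro D hD ε hε
  obtain ⟨Gm, hGm, hGmD, hm⟩ := exists_BAlg_inner_approx hwit hD (half_pos hε)
  obtain ⟨Gp, hGp, hDGp, hp⟩ := exists_BAlg_outer_approx hwit hD (half_pos hε)
  have hDdef : (univ : Set M).Definable L (cyl (Sum.inr : β → α ⊕ β) D) :=
    hD.preimage_comp Sum.inr
  have hbounds : ∀ om ∈ extSpace L A lam mu,
      om.toFun Gm ≤ nu.toFun D ∧ nu.toFun D ≤ om.toFun Gp := fun om hom => by
    rw [← hwit om hom D hD]
    exact ⟨om.mono hGm.definable hDdef hGmD, om.mono hDdef hGp.definable hDGp⟩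
  refine ⟨Gm, Gp, hGm, hGp, hGmD, hDGp, fun om hom => ?_, fun om hom => ?_⟩
  · linarith [hm om hom, hp om hom]
  · obtain ⟨hlo, hhi⟩ := hbounds om hom
    have := hm om hom
    have := hp om hom
    exact ⟨abs_lt.2 ⟨by linarith, by linarith⟩, abs_lt.2 ⟨by linarith, by linarith⟩⟩

/-- Uniform approximation property: if `λ` witnesses `μ ≥_{E,A} ν`, then for every
globally definable `D ∈ L_β(M)` and every `ε > 0` there are `G_ε⁻, G_ε⁺ ∈ 𝔹_{αβ}(A)`,
independent of `ω`, with `G_ε⁻ ⊆ M^α × D ⊆ G_ε⁺`, such that for every `ω ∈ E(λ,μ)`,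
`ω(G_ε⁺) − ω(G_ε⁻) < ε` and `|ω(G_ε^±) − ν(D)| < ε`. -/
theorem extDom_uniform_approximation {L : FirstOrder.Language} {M : Type*}
    [L.Structure M] (A : Set M) {α β : Type*}
    (mu : KeislerMeasure L M (Set.univ : Set M) α)
    (nu : KeislerMeasure L M (Set.univ : Set M) β)
    (lam : KeislerMeasure L M A (α ⊕ β))
    (hmarg : ∀ X : Set (α → M), A.Definable L X →
      lam.toFun (cyl Sum.inl X) = mu.toFun X)
    (hwit : ∀ om ∈ extSpace L A lam mu, ∀ Y : Set (β → M),
      (Set.univ : Set M).Definable L Y → om.toFun (cyl Sum.inr Y) = nu.toFun Y) :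
    ∀ D : Set (β → M), (Set.univ : Set M).Definable L D → ∀ ε : ℝ, 0 < ε →
      ∃ Gm Gp : Set (α ⊕ β → M), BAlg L M A α β Gm ∧ BAlg L M A α β Gp ∧
        Gm ⊆ cyl Sum.inr D ∧ cyl Sum.inr D ⊆ Gp ∧
        (∀ om ∈ extSpace L A lam mu, om.toFun Gp - om.toFun Gm < ε) ∧
        (∀ om ∈ extSpace L A lam mu,
          |om.toFun Gm - nu.toFun D| < ε ∧ |om.toFun Gp - nu.toFun D| < ε) :=
  extDom_uniform_approximation_general A mu nu lam hwit
end

section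
/- Let A ⊆ M and let ν ∈ 𝔐_y(M) be a global Keisler measure that is smooth over A. Then for every global Keisler measure μ ∈ 𝔐_x(M), μ ≥_{E,A} ν. -/
open FirstOrder

/-- A global Keisler measure `μ ∈ 𝔐_α(M)` is smooth over `A`: any global Keisler
measure agreeing with `μ` on `A`-definable sets agrees with `μ` on all (globally)
definable sets. -/
def SmoothOver (L : FirstOrder.Language) {M : Type*} [L.Structure M] (A : Set M)
    {α : Type*} (mu : KeislerMeasure L M (Set.univ : Set M) α) : Prop :=
  ∀ mu' : KeislerMeasure L M (Set.univ : Set M) α,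
    (∀ s : Set (α → M), A.Definable L s → mu'.toFun s = mu.toFun s) →
    ∀ s : Set (α → M), (Set.univ : Set M).Definable L s → mu'.toFun s = mu.toFun s

/-!
By smoothness it suffices to find `λ ∈ 𝔐_xy(A)` whose marginals are `μ|_A` and `ν|_A`: then
every `ω ∈ E(λ, μ)` has `π_y(ω)` agreeing with `ν` on `A`-definable sets, hence `π_y(ω) = ν`.
We take `λ(S) = ∫∫ 1_S(a, b) dν(b) dμ(a)`. The slices `S_a` and the functions `a ↦ ν(S_a)` are
not `A`-definable, so `μ` and `ν` are first extended to means on all bounded functions: by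
Hahn–Banach, dominated by the upper integral `inf {∑ cᵢ κ(sᵢ) | f ≤ ∑ cᵢ 1_{sᵢ}}`, which is finite
because a step function bounded below by `b` has step integral at least `b`.
-/

open MeasureTheory Pointwise

noncomputable section

section FinitelyAdditive

variable {ι : Type*}

def boundedFunctions (ι : Type*) : Submodule ℝ (ι → ℝ) where
  carrier := {f | ∃ C, ∀ i, |f i| ≤ C}
  add_mem' := by
    rintro f g ⟨C, hC⟩ ⟨D, hD⟩
    exact ⟨C + D, fun i => (abs_add_le _ _).trans (add_le_add (hC i) (hD i))⟩
  zero_mem' := ⟨0, by simp⟩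
  smul_mem' := by
    rintro c f ⟨C, hC⟩
    refine ⟨|c| * C, fun i => ?_⟩
    simpa [abs_mul] using mul_le_mul_of_nonneg_left (hC i) (abs_nonneg c)

lemma const_mem_boundedFunctions (c : ℝ) : (fun _ => c) ∈ boundedFunctions ι :=
  ⟨|c|, fun _ => le_rfl⟩

lemma indicator_one_mem_boundedFunctions (s : Set ι) : s.indicator 1 ∈ boundedFunctions ι :=
  ⟨1, fun i => by by_cases h : i ∈ s <;> simp [h]⟩

structure IsFinitelyAdditiveMeasure (𝒜 : Set (Set ι)) (κ : Set ι → ℝ) : Prop where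
  isSetAlgebra : IsSetAlgebra 𝒜
  nonneg : ∀ s ∈ 𝒜, 0 ≤ κ s
  union_of_disjoint : ∀ s ∈ 𝒜, ∀ t ∈ 𝒜, Disjoint s t → κ (s ∪ t) = κ s + κ t

def stepFun (l : List (ℝ × Set ι)) : ι → ℝ := (l.map fun p => p.1 • p.2.indicator 1).sum

def stepIntegral (κ : Set ι → ℝ) (l : List (ℝ × Set ι)) : ℝ := (l.map fun p => p.1 * κ p.2).sum

@[simp]
lemma stepFun_nil : stepFun ([] : List (ℝ × Set ι)) = 0 := rfl

@[simp]
lemma stepFun_cons (c : ℝ) (s : Set ι) (l : List (ℝ × Set ι)) :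
    stepFun ((c, s) :: l) = c • s.indicator 1 + stepFun l := rfl

lemma stepFun_append (l l' : List (ℝ × Set ι)) : stepFun (l ++ l') = stepFun l + stepFun l' := by
  simp [stepFun]

lemma stepFun_smul (c : ℝ) (l : List (ℝ × Set ι)) :
    stepFun (l.map (Prod.map (c * ·) id)) = c • stepFun l := by
  simp only [stepFun, List.map_map, List.smul_sum]
  congr 1
  exact List.map_congr_left fun p _ => by simp [mul_smul]

variable (κ : Set ι → ℝ)

@[simp]
lemma stepIntegral_nil : stepIntegral κ [] = 0 := rfl

@[simp]
lemma stepIntegral_cons (c : ℝ) (s : Set ι) (l : List (ℝ × Set ι)) :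
    stepIntegral κ ((c, s) :: l) = c * κ s + stepIntegral κ l := rfl

lemma stepIntegral_append (l l' : List (ℝ × Set ι)) :
    stepIntegral κ (l ++ l') = stepIntegral κ l + stepIntegral κ l' := by
  simp [stepIntegral]

lemma stepIntegral_smul (c : ℝ) (l : List (ℝ × Set ι)) :
    stepIntegral κ (l.map (Prod.map (c * ·) id)) = c * stepIntegral κ l := by
  simp only [stepIntegral, List.map_map, ← List.sum_map_mul_left]
  congr 1
  exact List.map_congr_left fun p _ => by simp [mul_assoc]

variable {κ}

lemma stepIntegral_eq_add {κ₁ κ₂ : Set ι → ℝ} {l : List (ℝ × Set ι)}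
    (h : ∀ p ∈ l, κ p.2 = κ₁ p.2 + κ₂ p.2) :
    stepIntegral κ l = stepIntegral κ₁ l + stepIntegral κ₂ l := by
  induction l with
  | nil => simp
  | cons p l ih =>
    simp only [List.mem_cons, forall_eq_or_imp] at h
    simp only [stepIntegral, List.map_cons, List.sum_cons] at ih ⊢
    rw [ih h.2, h.1]
    ring

def upperSums (𝒜 : Set (Set ι)) (κ : Set ι → ℝ) (f : ι → ℝ) : Set ℝ :=
  stepIntegral κ '' {l | (∀ p ∈ l, p.2 ∈ 𝒜) ∧ f ≤ stepFun l}

def upperIntegral (𝒜 : Set (Set ι)) (κ : Set ι → ℝ) (f : ι → ℝ) : ℝ :=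
  sInf (upperSums 𝒜 κ f)

variable {𝒜 : Set (Set ι)}

lemma stepIntegral_mem_upperSums {f : ι → ℝ} {l : List (ℝ × Set ι)} (hl : ∀ p ∈ l, p.2 ∈ 𝒜)
    (hf : f ≤ stepFun l) : stepIntegral κ l ∈ upperSums 𝒜 κ f :=
  Set.mem_image_of_mem _ ⟨hl, hf⟩

lemma add_subset_upperSums (f g : ι → ℝ) :
    upperSums 𝒜 κ f + upperSums 𝒜 κ g ⊆ upperSums 𝒜 κ (f + g) := by
  refine Set.add_subset_iff.2 ?_
  rintro _ ⟨l, ⟨hl, hfl⟩, rfl⟩ _ ⟨l', ⟨hl', hgl'⟩, rfl⟩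
  rw [← stepIntegral_append]
  refine stepIntegral_mem_upperSums (fun p hp => ?_) ?_
  · rcases List.mem_append.1 hp with hp | hp
    exacts [hl p hp, hl' p hp]
  · rw [stepFun_append]
    exact add_le_add hfl hgl'

lemma smul_subset_upperSums {c : ℝ} (hc : 0 ≤ c) (f : ι → ℝ) :
    c • upperSums 𝒜 κ f ⊆ upperSums 𝒜 κ (c • f) := by
  refine Set.smul_set_subset_iff.2 ?_
  rintro _ ⟨l, ⟨hl, hfl⟩, rfl⟩
  rw [smul_eq_mul, ← stepIntegral_smul]
  refine stepIntegral_mem_upperSums (fun p hp => ?_) ?_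
  · obtain ⟨q, hq, rfl⟩ := List.mem_map.1 hp
    exact hl q hq
  rw [stepFun_smul]
  exact smul_le_smul_of_nonneg_left hfl hc

lemma upperSums_smul {c : ℝ} (hc : 0 < c) (f : ι → ℝ) :
    upperSums 𝒜 κ (c • f) = c • upperSums 𝒜 κ f := by
  refine Set.Subset.antisymm ?_ (smul_subset_upperSums hc.le f)
  have h := Set.smul_set_mono (a := c)
    (smul_subset_upperSums (𝒜 := 𝒜) (κ := κ) (inv_nonneg.2 hc.le) (c • f))
  rwa [smul_smul, mul_inv_cancel₀ hc.ne', one_smul, inv_smul_smul₀ hc.ne'] at h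

lemma upperIntegral_smul {c : ℝ} (hc : 0 < c) (f : ι → ℝ) :
    upperIntegral 𝒜 κ (c • f) = c * upperIntegral 𝒜 κ f := by
  rw [upperIntegral, upperSums_smul hc, Real.sInf_smul_of_nonneg hc.le, smul_eq_mul, upperIntegral]

namespace IsFinitelyAdditiveMeasure

lemma empty (hκ : IsFinitelyAdditiveMeasure 𝒜 κ) : κ ∅ = 0 := by
  have h := hκ.union_of_disjoint ∅ hκ.isSetAlgebra.empty_mem ∅ hκ.isSetAlgebra.empty_mem
    (Set.disjoint_empty _)
  rw [Set.union_empty] at h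
  linarith

lemma inter_add_inter_compl (hκ : IsFinitelyAdditiveMeasure 𝒜 κ) {s t : Set ι} (hs : s ∈ 𝒜)
    (ht : t ∈ 𝒜) :
    κ (s ∩ t) + κ (s ∩ tᶜ) = κ s := by
  have h𝒜 := hκ.isSetAlgebra
  rw [← hκ.union_of_disjoint _ (h𝒜.inter_mem hs ht) _ (h𝒜.inter_mem hs (h𝒜.compl_mem ht))
    (disjoint_compl_right.mono Set.inter_subset_right Set.inter_subset_right),
    Set.inter_union_compl]

/-- Localising to `R` lets the induction split `R` along the first set of `l`. -/
theorem mul_le_stepIntegral_inter (hκ : IsFinitelyAdditiveMeasure 𝒜 κ) {l : List (ℝ × Set ι)}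
    (hl : ∀ p ∈ l, p.2 ∈ 𝒜) {b : ℝ} {R : Set ι} (hR : R ∈ 𝒜) (hb : ∀ x ∈ R, b ≤ stepFun l x) :
    b * κ R ≤ stepIntegral (fun s => κ (s ∩ R)) l := by
  have h𝒜 := hκ.isSetAlgebra
  induction l generalizing b R with
  | nil =>
    rcases R.eq_empty_or_nonempty with rfl | ⟨x, hx⟩
    · simp [hκ.empty]
    · simpa using mul_nonpos_of_nonpos_of_nonneg (by simpa using hb x hx) (hκ.nonneg R hR)
  | cons p l ih =>
    obtain ⟨c, S⟩ := p
    simp only [List.mem_cons, forall_eq_or_imp] at hl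
    obtain ⟨hS, hl⟩ := hl
    have on_S := ih hl (b := b - c) (h𝒜.inter_mem hR hS) fun x hx => by
      have := hb x hx.1
      simp only [stepFun_cons, Pi.add_apply, Pi.smul_apply, Set.indicator_of_mem hx.2,
        Pi.one_apply, smul_eq_mul, mul_one] at this
      linarith
    have off_S := ih hl (b := b) (h𝒜.inter_mem hR (h𝒜.compl_mem hS)) fun x hx => by
      simpa [Set.notMem_of_mem_compl hx.2] using hb x hx.1
    have split : stepIntegral (fun s => κ (s ∩ R)) l =
        stepIntegral (fun s => κ (s ∩ (R ∩ S))) l + stepIntegral (fun s => κ (s ∩ (R ∩ Sᶜ))) l :=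
      stepIntegral_eq_add fun p hp => by
        simp only [← Set.inter_assoc]
        exact (hκ.inter_add_inter_compl (h𝒜.inter_mem (hl p hp) hR) hS).symm
    rw [stepIntegral_cons, split, Set.inter_comm S R, ← hκ.inter_add_inter_compl hR hS]
    linarith

lemma upperSums_nonempty (hκ : IsFinitelyAdditiveMeasure 𝒜 κ) {f : ι → ℝ}
    (hf : f ∈ boundedFunctions ι) : (upperSums 𝒜 κ f).Nonempty := by
  obtain ⟨C, hC⟩ := hf
  refine ⟨_, stepIntegral_mem_upperSums (l := [(C, Set.univ)])
    (by simpa using hκ.isSetAlgebra.univ_mem) fun x => ?_⟩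
  simpa using (abs_le.1 (hC x)).2

lemma mul_univ_le_of_mem_upperSums (hκ : IsFinitelyAdditiveMeasure 𝒜 κ) {f : ι → ℝ} {b : ℝ}
    (hb : ∀ x, b ≤ f x) {r : ℝ} (hr : r ∈ upperSums 𝒜 κ f) : b * κ Set.univ ≤ r := by
  obtain ⟨l, ⟨hl, hfl⟩, rfl⟩ := hr
  simpa using hκ.mul_le_stepIntegral_inter hl hκ.isSetAlgebra.univ_mem
    fun x _ => (hb x).trans (hfl x)

lemma bddBelow_upperSums (hκ : IsFinitelyAdditiveMeasure 𝒜 κ) {f : ι → ℝ}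
    (hf : f ∈ boundedFunctions ι) : BddBelow (upperSums 𝒜 κ f) := by
  obtain ⟨C, hC⟩ := hf
  exact ⟨_, fun r => hκ.mul_univ_le_of_mem_upperSums (fun x => (abs_le.1 (hC x)).1)⟩

lemma upperIntegral_le (hκ : IsFinitelyAdditiveMeasure 𝒜 κ) {f : ι → ℝ}
    (hf : f ∈ boundedFunctions ι) {l : List (ℝ × Set ι)} (hl : ∀ p ∈ l, p.2 ∈ 𝒜)
    (hfl : f ≤ stepFun l) : upperIntegral 𝒜 κ f ≤ stepIntegral κ l :=
  csInf_le (hκ.bddBelow_upperSums hf) (stepIntegral_mem_upperSums hl hfl)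

lemma upperIntegral_add_le (hκ : IsFinitelyAdditiveMeasure 𝒜 κ) {f g : ι → ℝ}
    (hf : f ∈ boundedFunctions ι) (hg : g ∈ boundedFunctions ι) :
    upperIntegral 𝒜 κ (f + g) ≤ upperIntegral 𝒜 κ f + upperIntegral 𝒜 κ g := by
  unfold upperIntegral
  rw [← csInf_add (hκ.upperSums_nonempty hf) (hκ.bddBelow_upperSums hf)
    (hκ.upperSums_nonempty hg) (hκ.bddBelow_upperSums hg)]
  exact csInf_le_csInf (hκ.bddBelow_upperSums (add_mem hf hg))
    ((hκ.upperSums_nonempty hf).add (hκ.upperSums_nonempty hg)) (add_subset_upperSums f g)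

lemma upperIntegral_zero_nonneg (hκ : IsFinitelyAdditiveMeasure 𝒜 κ) :
    0 ≤ upperIntegral 𝒜 κ 0 :=
  le_csInf (hκ.upperSums_nonempty (zero_mem _)) fun _ hr => by
    simpa using hκ.mul_univ_le_of_mem_upperSums (b := 0) (fun _ => le_rfl) hr

/-- Hahn–Banach, with `upperIntegral` as the sublinear bound on the bounded functions. -/
theorem exists_linear_extension (hκ : IsFinitelyAdditiveMeasure 𝒜 κ) :
    ∃ I : (ι → ℝ) →ₗ[ℝ] ℝ, (∀ f ∈ boundedFunctions ι, 0 ≤ f → 0 ≤ I f) ∧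
      ∀ s ∈ 𝒜, I (s.indicator 1) = κ s := by
  obtain ⟨G, -, hG⟩ := exists_extension_of_le_sublinear (⊥ : boundedFunctions ι →ₗ.[ℝ] ℝ)
    (fun f => upperIntegral 𝒜 κ f) (fun c hc f => upperIntegral_smul hc (f : ι → ℝ))
    (fun f g => hκ.upperIntegral_add_le f.2 g.2)
    (fun ⟨f, hf⟩ => by
      obtain rfl := (Submodule.mem_bot ℝ).1 hf
      exact hκ.upperIntegral_zero_nonneg)
  obtain ⟨I, hI⟩ := LinearMap.exists_extend G
  have le_stepIntegral : ∀ f ∈ boundedFunctions ι, ∀ l : List (ℝ × Set ι),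
      (∀ p ∈ l, p.2 ∈ 𝒜) → f ≤ stepFun l → I f ≤ stepIntegral κ l := fun f hf l hl hfl =>
    (LinearMap.congr_fun hI ⟨f, hf⟩ ▸ hG ⟨f, hf⟩).trans (hκ.upperIntegral_le hf hl hfl)
  refine ⟨I, fun f hf hf0 => ?_, fun s hs => le_antisymm ?_ ?_⟩
  · simpa using le_stepIntegral (-f) (neg_mem hf) [] (by simp) (by simpa using hf0)
  · simpa using le_stepIntegral _ (indicator_one_mem_boundedFunctions s) [(1, s)]
      (by simpa using hs) (by simp)
  · have := le_stepIntegral _ (neg_mem (indicator_one_mem_boundedFunctions s)) [(-1, s)]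
      (by simpa using hs) (by simp)
    simp only [map_neg, stepIntegral_cons, neg_mul, one_mul, stepIntegral_nil, add_zero,
      neg_le_neg_iff] at this
    exact this

end IsFinitelyAdditiveMeasure

end FinitelyAdditive

section Mean

variable {ι : Type*}

/-- Integration against a finitely additive probability on all subsets of `ι`; only its values
on bounded functions are constrained. -/
structure IsMean (I : (ι → ℝ) →ₗ[ℝ] ℝ) : Prop where
  map_one : I 1 = 1
  nonneg : ∀ f ∈ boundedFunctions ι, 0 ≤ f → 0 ≤ I f

namespace IsMean

variable {I : (ι → ℝ) →ₗ[ℝ] ℝ}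

lemma map_const (hI : IsMean I) (c : ℝ) : I (fun _ => c) = c := by
  rw [show (fun _ => c) = c • (1 : ι → ℝ) by ext; simp, map_smul, hI.map_one, smul_eq_mul, mul_one]

lemma mono (hI : IsMean I) {f g : ι → ℝ} (hf : f ∈ boundedFunctions ι)
    (hg : g ∈ boundedFunctions ι) (hfg : f ≤ g) : I f ≤ I g :=
  sub_nonneg.1 (map_sub I g f ▸ hI.nonneg _ (sub_mem hg hf) (sub_nonneg.2 hfg))

lemma abs_apply_le (hI : IsMean I) {f : ι → ℝ} {C : ℝ} (hf : ∀ i, |f i| ≤ C) : |I f| ≤ C := by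
  have hfb : f ∈ boundedFunctions ι := ⟨C, hf⟩
  refine _root_.abs_le.2 ⟨?_, ?_⟩
  · simpa [hI.map_const] using
      hI.mono (const_mem_boundedFunctions (-C)) hfb fun i => (_root_.abs_le.1 (hf i)).1
  · simpa [hI.map_const] using
      hI.mono hfb (const_mem_boundedFunctions C) fun i => (_root_.abs_le.1 (hf i)).2

lemma indicator_nonneg (hI : IsMean I) (s : Set ι) : 0 ≤ I (s.indicator 1) :=
  hI.nonneg _ (indicator_one_mem_boundedFunctions s) (Set.indicator_nonneg fun _ _ => zero_le_one)

end IsMean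

end Mean

section IteratedIntegral

variable {α β M : Type*}

def iteratedIntegral (I : ((α → M) → ℝ) →ₗ[ℝ] ℝ) (J : ((β → M) → ℝ) →ₗ[ℝ] ℝ) :
    ((α ⊕ β → M) → ℝ) →ₗ[ℝ] ℝ :=
  I ∘ₗ LinearMap.pi fun a => J ∘ₗ LinearMap.funLeft ℝ ℝ (Sum.elim a)

variable {I : ((α → M) → ℝ) →ₗ[ℝ] ℝ} {J : ((β → M) → ℝ) →ₗ[ℝ] ℝ}

lemma iteratedIntegral_apply (F : (α ⊕ β → M) → ℝ) :
    iteratedIntegral I J F = I fun a => J fun b => F (Sum.elim a b) := rfl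

lemma IsMean.iteratedIntegral (hI : IsMean I) (hJ : IsMean J) : IsMean (iteratedIntegral I J) where
  map_one := by simp only [iteratedIntegral_apply, Pi.one_apply, hJ.map_const, hI.map_const]
  nonneg F := by
    rintro ⟨C, hC⟩ hF
    exact hI.nonneg _ ⟨C, fun a => hJ.abs_apply_le fun b => hC _⟩
      fun a => hJ.nonneg _ ⟨C, fun b => hC _⟩ fun b => hF _

lemma iteratedIntegral_comp_inl (hJ : IsMean J) (f : (α → M) → ℝ) :
    iteratedIntegral I J (fun g => f (g ∘ Sum.inl)) = I f := by
  simp only [iteratedIntegral_apply, Sum.elim_comp_inl, hJ.map_const]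

lemma iteratedIntegral_comp_inr (hI : IsMean I) (f : (β → M) → ℝ) :
    iteratedIntegral I J (fun g => f (g ∘ Sum.inr)) = J f := by
  simp only [iteratedIntegral_apply, Sum.elim_comp_inr, hI.map_const]

end IteratedIntegral

namespace KeislerMeasure

variable {L : FirstOrder.Language} {M : Type*} [L.Structure M] {A : Set M} {α β : Type*}

lemma toFun_empty (μ : KeislerMeasure L M A α) : μ.toFun ∅ = 0 := by
  rw [← Set.compl_univ, μ.compl' _ Set.definable_univ, μ.measure_univ, sub_self]

lemma isFinitelyAdditiveMeasure (μ : KeislerMeasure L M A α) :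
    IsFinitelyAdditiveMeasure {s | A.Definable L s} μ.toFun where
  isSetAlgebra := ⟨Set.definable_empty, fun _ hs => hs.compl, fun _ _ hs ht => hs.union ht⟩
  nonneg := μ.nonneg'
  union_of_disjoint s hs t ht hst := by
    rw [μ.union_inter' s t hs ht, hst.inter_eq, μ.toFun_empty, sub_zero]

theorem exists_isMean_extension (μ : KeislerMeasure L M A α) :
    ∃ I : ((α → M) → ℝ) →ₗ[ℝ] ℝ, IsMean I ∧
      ∀ s, A.Definable L s → I (s.indicator 1) = μ.toFun s := by
  obtain ⟨I, hI_nonneg, hI⟩ := μ.isFinitelyAdditiveMeasure.exists_linear_extension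
  refine ⟨I, ⟨?_, hI_nonneg⟩, hI⟩
  rw [← Set.indicator_univ (1 : (α → M) → ℝ), hI _ Set.definable_univ, μ.measure_univ]

variable (L A) in
def ofMean (I : ((α → M) → ℝ) →ₗ[ℝ] ℝ) (hI : IsMean I) : KeislerMeasure L M A α where
  toFun s := I (s.indicator 1)
  measure_univ := by rw [Set.indicator_univ]; exact hI.map_one
  nonneg' s _ := hI.indicator_nonneg s
  compl' _ _ := by rw [Set.indicator_compl, map_sub, hI.map_one]
  union_inter' _ _ _ _ := by
    rw [eq_sub_iff_add_eq, ← map_add, Set.indicator_union_add_inter, map_add]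

/-- For `f = Sum.inr` this is the marginal `π_y`. -/
def marginal (f : α → β) (μ : KeislerMeasure L M A β) : KeislerMeasure L M A α where
  toFun s := μ.toFun (cyl f s)
  measure_univ := μ.measure_univ
  nonneg' _ hs := μ.nonneg' _ (hs.preimage_comp f)
  compl' _ hs := μ.compl' _ (hs.preimage_comp f)
  union_inter' _ _ hs ht := μ.union_inter' _ _ (hs.preimage_comp f) (ht.preimage_comp f)

end KeislerMeasure

end

/-- A measure smooth over `A` is extension dominated over `A` by every global
Keisler measure: if `ν ∈ 𝔐_β(M)` is smooth over `A`, then `μ ≥_{E,A} ν` for all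
`μ ∈ 𝔐_α(M)`. -/
theorem extDom_of_smooth {L : FirstOrder.Language} {M : Type*} [L.Structure M]
    (A : Set M) {α β : Type*}
    (nu : KeislerMeasure L M (Set.univ : Set M) β)
    (hsmooth : SmoothOver L A nu) :
    ∀ mu : KeislerMeasure L M (Set.univ : Set M) α, ExtDomOver L A mu nu := by
  intro mu
  obtain ⟨Iμ, hIμ, hμ⟩ := mu.exists_isMean_extension
  obtain ⟨Iν, hIν, hν⟩ := nu.exists_isMean_extension
  refine ⟨.ofMean L A (iteratedIntegral Iμ Iν) (hIμ.iteratedIntegral hIν), fun X hX => ?_, ?_⟩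
  · exact (iteratedIntegral_comp_inl hIν _).trans (hμ X (hX.mono (Set.subset_univ A)))
  · rintro om ⟨hom, -⟩ Y hY
    refine hsmooth (om.marginal Sum.inr) (fun Z hZ => ?_) Y hY
    exact (hom _ (hZ.preimage_comp Sum.inr)).trans
      ((iteratedIntegral_comp_inr hIμ _).trans (hν Z (hZ.mono (Set.subset_univ A))))
end

section
/- Let M₀ ≼ M be an elementary substructure and let μ ∈ 𝔐_x(M), ν ∈ 𝔐_y(M) be global Keisler measures. If μ is finitely satisfiable in M₀ and μ ≥_{E,M₀} ν (extension domination over the underlying set of M₀), then ν is finitely satisfiable in M₀. -/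
open FirstOrder

/-- A global Keisler measure `μ ∈ 𝔐_α(M)` is finitely satisfiable in a set
`N ⊆ M`: every definable set of positive measure contains a tuple from `N^α`. -/
def FinitelySatisfiableIn (L : FirstOrder.Language) {M : Type*} [L.Structure M]
    (N : Set M) {α : Type*} (mu : KeislerMeasure L M (Set.univ : Set M) α) : Prop :=
  ∀ X : Set (α → M), (Set.univ : Set M).Definable L X → 0 < mu.toFun X →
    ∃ a ∈ X, ∀ i, a i ∈ N

/-!
Suppose `ν(Y) > 0` although `Y` has no tuple from `M₀`. We build `ω ∈ E(λ, μ)` concentrated on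
tuples from `M₀`; then `π_β(ω)(Y) = 0 ≠ ν(Y)`, contradicting `μ ≥_{E,M₀} ν`.

Finitely additive `[0,1]`-valued charges on all subsets form a compact space (Tychonoff), so it
suffices to match `λ` on finitely many `M₀`-definable sets and `μ` on finitely many definable
sets. For that, refine the atoms of the given sets by the atoms of their projections, glue `λ`
and `μ` conditionally independently over the projection atoms, and put each resulting mass at a
tuple from `M₀` in its cell: finite satisfiability of `μ` supplies the `α`-part, and the
Tarski–Vaught property of `M₀` the `β`-part.
-/

open FirstOrder.Language

section Definability

variable {L : Language} {M : Type*} [L.Structure M] {α β : Type*}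

theorem Set.Definable.exists_finset_restrict_right {A : Set M} {D : Set (α ⊕ β → M)}
    (hD : A.Definable L D) :
    ∃ (W : Finset β) (D' : Set (α ⊕ W → M)), A.Definable L D' ∧
      ∀ a b, Sum.elim a b ∈ D ↔ Sum.elim a (b ∘ (↑)) ∈ D' := by
  classical
  obtain ⟨φ, rfl⟩ := hD
  let f : φ.freeVarFinset → α ⊕ φ.freeVarFinset.toRight := fun x =>
    Sum.casesOn (motive := fun y => y ∈ φ.freeVarFinset → _) x.1 (fun i _ => Sum.inl i)
      (fun j hj => Sum.inr ⟨j, Finset.mem_toRight.2 hj⟩) x.2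
  refine ⟨_, Set.ofPred (Formula.Realize (φ.restrictFreeVar f)), ⟨_, rfl⟩, fun a b => ?_⟩
  exact (BoundedFormula.realize_restrictFreeVar _ (by rintro ⟨i | j, h⟩ <;> rfl)).symm

theorem Set.Definable.exists_sumElim {A : Set M} {D : Set (α ⊕ β → M)}
    (hD : A.Definable L D) : A.Definable L {a : α → M | ∃ b : β → M, Sum.elim a b ∈ D} := by
  rcases isEmpty_or_nonempty M with hM | ⟨⟨m⟩⟩
  · exact Subsingleton.set_cases (p := A.Definable L) Set.definable_empty Set.definable_univ _
  obtain ⟨W, D', hD', hiff⟩ := hD.exists_finset_restrict_right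
  convert hD'.exists_of_finite using 1
  ext a
  simp only [Set.mem_ofPred_eq, hiff]
  refine ⟨fun ⟨b, hb⟩ => ⟨_, hb⟩, fun ⟨u, hu⟩ => ⟨Function.extend (↑) u fun _ => m, ?_⟩⟩
  rwa [Function.extend_comp Subtype.val_injective]

namespace FirstOrder.Language.ElementarySubstructure

theorem exists_sumElim_mem_of_finite [Finite β] (M₀ : L.ElementarySubstructure M)
    {D : Set (α ⊕ β → M)} (hD : (M₀ : Set M).Definable L D) {a : α → M} (ha : ∀ i, a i ∈ M₀)
    (h : ∃ b, Sum.elim a b ∈ D) : ∃ b, (∀ j, b j ∈ M₀) ∧ Sum.elim a b ∈ D := by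
  obtain ⟨φ, rfl⟩ := Set.definable_iff_exists_formula_sum.1 hD
  let ψ : L.Formula (((M₀ : Set M) ⊕ α) ⊕ β) := φ.relabel (Equiv.sumAssoc _ _ _).symm
  let v : (M₀ : Set M) ⊕ α → M₀ := Sum.elim (fun m => ⟨m, m.2⟩) fun i => ⟨a i, ha i⟩
  have hv : M₀.subtype ∘ v = Sum.elim (↑) a := by ext (_ | _) <;> rfl
  have hψ : (ψ.iExs β).Realize (M₀.subtype ∘ v) := by
    obtain ⟨b, hb : φ.Realize _⟩ := h
    rw [hv, Formula.realize_iExs]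
    refine ⟨b, ?_⟩
    rw [Formula.realize_relabel]
    convert hb using 2
    funext x
    rcases x with _ | _ | _ <;> rfl
  rw [M₀.subtype.map_formula, Formula.realize_iExs] at hψ
  obtain ⟨u, hu⟩ := hψ
  refine ⟨fun j => u j, fun j => (u j).2, ?_⟩
  rw [← M₀.subtype.map_formula, Formula.realize_relabel] at hu
  change φ.Realize _
  convert hu using 2
  funext x
  rcases x with _ | _ | _ <;> rfl

theorem exists_sumElim_mem (M₀ : L.ElementarySubstructure M)
    {D : Set (α ⊕ β → M)} (hD : (M₀ : Set M).Definable L D) {a : α → M} (ha : ∀ i, a i ∈ M₀)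
    (h : ∃ b, Sum.elim a b ∈ D) : ∃ b, (∀ j, b j ∈ M₀) ∧ Sum.elim a b ∈ D := by
  obtain ⟨b₀, hb₀⟩ := h
  rcases isEmpty_or_nonempty β with hβ | ⟨⟨j₀⟩⟩
  · exact ⟨b₀, fun j => isEmptyElim j, hb₀⟩
  have : Nonempty M := ⟨b₀ j₀⟩
  obtain ⟨m⟩ : Nonempty M₀ := inferInstance
  obtain ⟨W, D', hD', hiff⟩ := hD.exists_finset_restrict_right
  obtain ⟨u, hu, huD⟩ := exists_sumElim_mem_of_finite M₀ hD' ha ⟨_, (hiff a b₀).1 hb₀⟩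
  refine ⟨Function.extend (↑) u fun _ => m, fun j => ?_, ?_⟩
  · classical
    rw [Function.extend_def]
    split_ifs
    exacts [hu _, m.2]
  · rwa [hiff, Function.extend_comp Subtype.val_injective]

end FirstOrder.Language.ElementarySubstructure

end Definability

section Atoms

variable {W : Type*}

def atomOf (C ρ : Finset (Set W)) : Set W :=
  ⋂ s ∈ C, if s ∈ ρ then s else sᶜ

variable {C ρ : Finset (Set W)} {s : Set W}

theorem mem_atomOf {w : W} : w ∈ atomOf C ρ ↔ ∀ s ∈ C, (w ∈ s ↔ s ∈ ρ) := by
  simp only [atomOf, Set.mem_iInter]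
  refine forall₂_congr fun s _ => ?_
  split_ifs with h <;> simp [h]

theorem atomOf_subset (hs : s ∈ C) (h : s ∈ ρ) : atomOf C ρ ⊆ s :=
  fun _ hw => (mem_atomOf.1 hw s hs).2 h

theorem atomOf_subset_compl (hs : s ∈ C) (h : s ∉ ρ) : atomOf C ρ ⊆ sᶜ :=
  fun _ hw hws => h ((mem_atomOf.1 hw s hs).1 hws)

theorem atomOf_inter (hs : s ∈ C) : atomOf C ρ ∩ s = if s ∈ ρ then atomOf C ρ else ∅ := by
  split_ifs with h
  · exact Set.inter_eq_left.2 (atomOf_subset hs h)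
  · exact (Set.subset_compl_iff_disjoint_right.1 (atomOf_subset_compl hs h)).inter_eq

theorem pairwiseDisjoint_atomOf (C : Finset (Set W)) :
    (C.powerset : Set (Finset (Set W))).PairwiseDisjoint (atomOf C) := by
  intro ρ hρ ρ' hρ' hne
  refine Set.disjoint_left.2 fun w hw hw' => hne (Finset.ext fun s => ?_)
  have hC : s ∈ ρ ∨ s ∈ ρ' → s ∈ C := by
    rintro (h | h)
    exacts [Finset.mem_powerset.1 hρ h, Finset.mem_powerset.1 hρ' h]
  exact ⟨fun h => (mem_atomOf.1 hw' s (hC (.inl h))).1 ((mem_atomOf.1 hw s (hC (.inl h))).2 h),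
    fun h => (mem_atomOf.1 hw s (hC (.inr h))).1 ((mem_atomOf.1 hw' s (hC (.inr h))).2 h)⟩

theorem exists_mem_atomOf (C : Finset (Set W)) (w : W) : ∃ ρ ∈ C.powerset, w ∈ atomOf C ρ := by
  classical
  exact ⟨{s ∈ C | w ∈ s}, Finset.mem_powerset.2 (Finset.filter_subset _ C),
    mem_atomOf.2 fun s hs => by simp [hs]⟩

end Atoms

section Charges

variable {W : Type*} {P : Set W}

def chargesOn (P : Set W) : Set (Set W → ℝ) :=
  {y | y Set.univ = 1 ∧ (∀ D, 0 ≤ y D) ∧ (∀ D, y Dᶜ = 1 - y D) ∧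
    (∀ D D', y (D ∪ D') = y D + y D' - y (D ∩ D')) ∧ ∀ D, Disjoint D P → y D = 0}

theorem isClosed_chargesOn (P : Set W) : IsClosed (chargesOn P) := by
  simp only [chargesOn, Set.ofPred_and, Set.ofPred_forall]
  refine (isClosed_eq (continuous_apply _) continuous_const).inter <|
    (isClosed_iInter fun D => isClosed_le continuous_const (continuous_apply D)).inter <|
    (isClosed_iInter fun D => isClosed_eq (continuous_apply _) (by fun_prop)).inter <|
    (isClosed_iInter fun D => isClosed_iInter fun D' => isClosed_eq (continuous_apply _)
      (by fun_prop)).inter <|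
    isClosed_iInter fun D => isClosed_iInter fun _ => isClosed_eq (continuous_apply D)
      continuous_const

theorem isCompact_chargesOn (P : Set W) : IsCompact (chargesOn P) := by
  refine (isCompact_univ_pi fun _ => isCompact_Icc (a := (0 : ℝ)) (b := 1)).of_isClosed_subset
    (isClosed_chargesOn P) ?_
  rintro y ⟨-, hnonneg, hcompl, -⟩ D -
  exact ⟨hnonneg D, by linarith [hcompl D, hnonneg Dᶜ]⟩

theorem exists_mem_chargesOn_forall_eq {ι : Type*} (D : ι → Set W) (r : ι → ℝ)
    (h : ∀ u : Finset ι, ∃ y ∈ chargesOn P, ∀ i ∈ u, y (D i) = r i) :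
    ∃ y ∈ chargesOn P, ∀ i, y (D i) = r i := by
  obtain ⟨y, hy, hyr⟩ := (isCompact_chargesOn P).inter_iInter_nonempty
    (fun i => {y | y (D i) = r i}) (fun i => isClosed_eq (continuous_apply _) continuous_const)
    fun u => by
      obtain ⟨y, hy, hyr⟩ := h u
      exact ⟨y, hy, Set.mem_iInter₂.2 hyr⟩
  exact ⟨y, hy, Set.mem_iInter.1 hyr⟩

/-- Put the weight `w k` at a point of `P` in the cell `Z k`. -/
theorem exists_mem_chargesOn_of_cells {κ : Type*} {K : Finset κ} {w : κ → ℝ}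
    (hw : ∀ k ∈ K, 0 ≤ w k) (hsum : ∑ k ∈ K, w k = 1) {Z : κ → Set W}
    (hZ : ∀ k ∈ K, w k ≠ 0 → (Z k ∩ P).Nonempty) :
    ∃ y ∈ chargesOn P, ∀ (D : Set W) (Q : κ → Prop) [DecidablePred Q],
      (∀ k ∈ K, Q k → Z k ⊆ D) → (∀ k ∈ K, ¬ Q k → Z k ⊆ Dᶜ) →
      y D = ∑ k ∈ K, if Q k then w k else 0 := by
  classical
  obtain ⟨k, hk, hwk⟩ := Finset.exists_ne_zero_of_sum_ne_zero (hsum ▸ one_ne_zero)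
  have : Nonempty W := ⟨(hZ k hk hwk).some⟩
  let g k := Classical.epsilon (· ∈ Z k ∩ P)
  have hg : ∀ k ∈ K, w k ≠ 0 → g k ∈ Z k ∩ P := fun k hk hwk =>
    Classical.epsilon_spec (hZ k hk hwk)
  refine ⟨fun D => ∑ k ∈ K, if g k ∈ D then w k else 0, ⟨?_, ?_, ?_, ?_, ?_⟩, ?_⟩
  · simpa using hsum
  · exact fun D => Finset.sum_nonneg fun k hk => by split_ifs <;> simp [hw k hk]
  · intro D
    rw [← hsum, ← Finset.sum_sub_distrib]
    refine Finset.sum_congr rfl fun k _ => ?_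
    by_cases h : g k ∈ D <;> simp [h]
  · intro D D'
    rw [← Finset.sum_add_distrib, ← Finset.sum_sub_distrib]
    refine Finset.sum_congr rfl fun k _ => ?_
    by_cases h : g k ∈ D <;> by_cases h' : g k ∈ D' <;> simp [h, h']
  · intro D hD
    refine Finset.sum_eq_zero fun k hk => ?_
    by_cases hwk : w k = 0
    · simp [hwk]
    · exact if_neg fun h => hD.notMem_of_mem_left h (hg k hk hwk).2
  · intro D Q _ hin hout
    refine Finset.sum_congr rfl fun k hk => ?_
    by_cases hwk : w k = 0
    · simp [hwk]
    by_cases hQ : Q k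
    · rw [if_pos hQ, if_pos (hin k hk hQ (hg k hk hwk).1)]
    · rw [if_neg hQ, if_neg (hout k hk hQ (hg k hk hwk).1)]

end Charges

section Partitions

variable {L : Language} {M : Type*} [L.Structure M] {γ δ ι : Type*}

structure IsDefinablePartition (L : Language) [L.Structure M] (A : Set M) (I : Finset ι)
    (P : ι → Set (γ → M)) : Prop where
  definable : ∀ i, A.Definable L (P i)
  pairwiseDisjoint : (I : Set ι).PairwiseDisjoint P
  exists_mem : ∀ g, ∃ i ∈ I, g ∈ P i

namespace IsDefinablePartition

variable {A B : Set M} {I : Finset ι} {P : ι → Set (γ → M)}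

theorem atomOf {C : Finset (Set (γ → M))} (hC : ∀ s ∈ C, A.Definable L s) :
    IsDefinablePartition L A C.powerset (_root_.atomOf C) where
  definable ρ := by
    rw [_root_.atomOf, ← Set.iInter_subtype (· ∈ C) fun s => if s.1 ∈ ρ then s.1 else s.1ᶜ]
    refine Set.definable_iInter_of_finite fun s => ?_
    split_ifs
    exacts [hC s s.2, (hC s s.2).compl]
  pairwiseDisjoint := pairwiseDisjoint_atomOf C
  exists_mem := exists_mem_atomOf C

theorem mono (hP : IsDefinablePartition L A I P) (hAB : A ⊆ B) :
    IsDefinablePartition L B I P :=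
  ⟨fun i => (hP.definable i).mono hAB, hP.pairwiseDisjoint, hP.exists_mem⟩

theorem cyl (hP : IsDefinablePartition L A I P) (f : γ → δ) :
    IsDefinablePartition L A I (fun i => _root_.cyl f (P i)) where
  definable i := (hP.definable i).preimage_comp f
  pairwiseDisjoint _ hi _ hj hij := (hP.pairwiseDisjoint hi hj hij).preimage _
  exists_mem g := hP.exists_mem (g ∘ f)

end IsDefinablePartition

end Partitions

namespace KeislerMeasure

variable {L : Language} {M : Type*} [L.Structure M] {A : Set M} {γ ι : Type*}
  (μ : KeislerMeasure L M A γ) {s t : Set (γ → M)}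

theorem apply_empty : μ.toFun ∅ = 0 := by
  have h := μ.compl' Set.univ Set.definable_univ
  rw [Set.compl_univ, μ.measure_univ] at h
  linarith

theorem nonempty_of_ne_zero (h : μ.toFun s ≠ 0) : s.Nonempty :=
  Set.nonempty_iff_ne_empty.2 fun hs => h (hs ▸ μ.apply_empty)

theorem apply_union (hs : A.Definable L s) (ht : A.Definable L t) (hst : Disjoint s t) :
    μ.toFun (s ∪ t) = μ.toFun s + μ.toFun t := by
  rw [μ.union_inter' s t hs ht, hst.inter_eq, apply_empty, sub_zero]

theorem apply_mono (hs : A.Definable L s) (ht : A.Definable L t) (hst : s ⊆ t) :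
    μ.toFun s ≤ μ.toFun t := by
  have h := μ.apply_union hs (ht.sdiff hs) Set.disjoint_sdiff_right
  rw [Set.union_sdiff_cancel hst] at h
  linarith [μ.nonneg' _ (ht.sdiff hs)]

theorem apply_biUnion {I : Finset ι} {P : ι → Set (γ → M)} (hP : ∀ i, A.Definable L (P i))
    (hdisj : (I : Set ι).PairwiseDisjoint P) :
    μ.toFun (⋃ i ∈ I, P i) = ∑ i ∈ I, μ.toFun (P i) := by
  classical
  induction I using Finset.induction_on with
  | empty => simp [apply_empty]
  | insert a I ha ih =>
    rw [Finset.set_biUnion_insert, Finset.sum_insert ha, ← ih (hdisj.subset (by simp)),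
      μ.apply_union (hP a) (Set.definable_biUnion_finset hP I)]
    exact Set.disjoint_iUnion₂_right.2 fun i hi =>
      hdisj (by simp) (by simp [hi]) fun h => ha (h ▸ hi)

theorem sum_apply_inter {I : Finset ι} {P : ι → Set (γ → M)}
    (hP : IsDefinablePartition L A I P) (hs : A.Definable L s) :
    ∑ i ∈ I, μ.toFun (P i ∩ s) = μ.toFun s := by
  rw [← μ.apply_biUnion (fun i => (hP.definable i).inter hs)
    (hP.pairwiseDisjoint.mono fun i => Set.inter_subset_left), ← Set.iUnion₂_inter]
  congr 1
  refine Set.inter_eq_right.2 fun g _ => ?_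
  obtain ⟨i, hi, hg⟩ := hP.exists_mem g
  exact Set.mem_biUnion hi hg

theorem sum_ite_atomOf {C : Finset (Set (γ → M))} (hC : ∀ s ∈ C, A.Definable L s) (hs : s ∈ C) :
    ∑ ρ ∈ C.powerset, (if s ∈ ρ then μ.toFun (atomOf C ρ) else 0) = μ.toFun s := by
  rw [← μ.sum_apply_inter (.atomOf hC) (hC s hs)]
  refine Finset.sum_congr rfl fun ρ _ => ?_
  rw [atomOf_inter hs, apply_ite μ.toFun, apply_empty]

def ofCharge {P : Set (γ → M)} {y : Set (γ → M) → ℝ} (hy : y ∈ chargesOn P) :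
    KeislerMeasure L M A γ where
  toFun := y
  measure_univ := hy.1
  nonneg' s _ := hy.2.1 s
  compl' s _ := hy.2.2.1 s
  union_inter' s t _ _ := hy.2.2.2.1 s t

end KeislerMeasure

theorem sum_mul_div_eq_of_sum_eq {ι : Type*} {s : Finset ι} {f : ι → ℝ} {a m : ℝ}
    (hf : ∑ i ∈ s, f i = m) (ha : m = 0 → a = 0) : ∑ i ∈ s, a * f i / m = a := by
  rw [← Finset.sum_div, ← Finset.mul_sum, hf]
  rcases eq_or_ne m 0 with hm | hm
  · simp [ha hm]
  · exact mul_div_cancel_right₀ a hm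

section Glue

variable {L : Language} {M : Type*} [L.Structure M] {A : Set M} {α β ι κ τ : Type*}

/-- The mass given to `P i ∩ ((Q j ∩ R t) × M^β)`, for `k = (i, j, t)`, by the gluing of `λ` and
`μ` that is conditionally independent over the partition `R`. A zero denominator comes with a
zero numerator, so the junk value `x / 0 = 0` is harmless. -/
noncomputable def glueWeight (lam : KeislerMeasure L M A (α ⊕ β))
    (mu : KeislerMeasure L M Set.univ α) (P : ι → Set (α ⊕ β → M)) (Q : κ → Set (α → M))
    (R : τ → Set (α → M)) (k : ι × κ × τ) : ℝ :=
  lam.toFun (P k.1 ∩ cyl Sum.inl (R k.2.2)) * mu.toFun (Q k.2.1 ∩ R k.2.2) / mu.toFun (R k.2.2)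

variable {lam : KeislerMeasure L M A (α ⊕ β)} {mu : KeislerMeasure L M Set.univ α}
  {I : Finset ι} {J : Finset κ} {K : Finset τ}
  {P : ι → Set (α ⊕ β → M)} {Q : κ → Set (α → M)} {R : τ → Set (α → M)}

theorem glueWeight_nonneg (hP : IsDefinablePartition L A I P)
    (hQ : IsDefinablePartition L Set.univ J Q) (hR : IsDefinablePartition L A K R)
    (k : ι × κ × τ) : 0 ≤ glueWeight lam mu P Q R k :=
  have hRu := hR.mono (Set.subset_univ A)
  div_nonneg (mul_nonneg (lam.nonneg' _ ((hP.definable _).inter ((hR.cyl _).definable _)))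
    (mu.nonneg' _ ((hQ.definable _).inter (hRu.definable _)))) (mu.nonneg' _ (hRu.definable _))

theorem glueWeight_ne_zero (hQ : IsDefinablePartition L Set.univ J Q)
    (hR : IsDefinablePartition L A K R) {i : ι} {j : κ} {t : τ}
    (h : glueWeight lam mu P Q R (i, j, t) ≠ 0) :
    (P i ∩ cyl Sum.inl (R t)).Nonempty ∧ 0 < mu.toFun (Q j ∩ R t) := by
  obtain ⟨hlam, hmu⟩ := mul_ne_zero_iff.1 (div_ne_zero_iff.1 h).1
  exact ⟨lam.nonempty_of_ne_zero hlam, (mu.nonneg' _ ((hQ.definable j).inter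
    ((hR.mono (Set.subset_univ A)).definable t))).lt_of_ne' hmu⟩

variable (hlam : ∀ X, A.Definable L X → lam.toFun (cyl Sum.inl X) = mu.toFun X)
include hlam

theorem sum_glueWeight_left (hP : IsDefinablePartition L A I P)
    (hQ : IsDefinablePartition L Set.univ J Q) (hR : IsDefinablePartition L A K R) (i : ι) :
    ∑ j ∈ J, ∑ t ∈ K, glueWeight lam mu P Q R (i, j, t) = lam.toFun (P i) := by
  rw [Finset.sum_comm, ← lam.sum_apply_inter (hR.cyl Sum.inl) (hP.definable i)]
  refine Finset.sum_congr rfl fun t _ => ?_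
  have hcyl := (hR.cyl (Sum.inl : α → α ⊕ β)).definable t
  rw [Set.inter_comm (cyl _ _)]
  simp only [glueWeight]
  refine sum_mul_div_eq_of_sum_eq
    (mu.sum_apply_inter hQ ((hR.mono (Set.subset_univ A)).definable t)) fun h0 => ?_
  refine le_antisymm ?_ (lam.nonneg' _ ((hP.definable i).inter hcyl))
  calc lam.toFun (P i ∩ cyl Sum.inl (R t)) ≤ lam.toFun (cyl Sum.inl (R t)) :=
        lam.apply_mono ((hP.definable i).inter hcyl) hcyl Set.inter_subset_right
    _ = 0 := by rw [hlam _ (hR.definable t), h0]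

theorem sum_glueWeight_right (hP : IsDefinablePartition L A I P)
    (hQ : IsDefinablePartition L Set.univ J Q) (hR : IsDefinablePartition L A K R) (j : κ) :
    ∑ i ∈ I, ∑ t ∈ K, glueWeight lam mu P Q R (i, j, t) = mu.toFun (Q j) := by
  have hRu := hR.mono (Set.subset_univ A)
  rw [Finset.sum_comm, ← mu.sum_apply_inter hRu (hQ.definable j)]
  refine Finset.sum_congr rfl fun t _ => ?_
  have hQR := (hQ.definable j).inter (hRu.definable t)
  simp only [glueWeight, mul_comm (lam.toFun _), Set.inter_comm (R t)]
  refine sum_mul_div_eq_of_sum_eq ?_ fun h0 => le_antisymm ?_ (mu.nonneg' _ hQR)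
  · rw [lam.sum_apply_inter hP ((hR.cyl (Sum.inl : α → α ⊕ β)).definable t),
      hlam _ (hR.definable t)]
  · exact h0 ▸ mu.apply_mono hQR (hRu.definable t) Set.inter_subset_right

end Glue

section Stage

variable {L : Language} {M : Type*} [L.Structure M] {α β : Type*}
  (M₀ : L.ElementarySubstructure M) {mu : KeislerMeasure L M Set.univ α}
  {lam : KeislerMeasure L M M₀ (α ⊕ β)}

theorem exists_mem_inter_cyl_of_finitelySatisfiableIn (hfs : FinitelySatisfiableIn L M₀ mu)
    {D : Set (α ⊕ β → M)} (hD : (M₀ : Set M).Definable L D) {B C : Set (α → M)}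
    (hB : (Set.univ : Set M).Definable L B) (hC : (Set.univ : Set M).Definable L C)
    (hBD : B ⊆ {a | ∃ b, Sum.elim a b ∈ D} ∨ B ⊆ {a | ∃ b, Sum.elim a b ∈ D}ᶜ)
    (hne : (D ∩ cyl Sum.inl B).Nonempty) (hpos : 0 < mu.toFun (C ∩ B)) :
    ∃ g ∈ D ∩ cyl Sum.inl C, ∀ i, g i ∈ M₀ := by
  obtain ⟨a, ⟨haC, haB⟩, ha⟩ := hfs _ (hC.inter hB) hpos
  have hproj : B ⊆ {a | ∃ b, Sum.elim a b ∈ D} := hBD.resolve_right fun h => by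
    obtain ⟨g, hgD, hgB⟩ := hne
    exact h hgB ⟨g ∘ Sum.inr, by rwa [← Sum.elim_comp_inl_inr g] at hgD⟩
  obtain ⟨b, hb, hab⟩ := M₀.exists_sumElim_mem hD ha (hproj haB)
  exact ⟨Sum.elim a b, ⟨hab, haC⟩, Sum.forall.2 ⟨ha, hb⟩⟩

open Classical in
/-- On an atom of `atomProjections S`, the projection of each atom of `S` is either everything
or nothing; this is what lets finite satisfiability of `μ` reach every cell of positive mass. -/
noncomputable def atomProjections (S : Finset (Set (α ⊕ β → M))) : Finset (Set (α → M)) :=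
  S.powerset.image fun ρ => {a | ∃ b, Sum.elim a b ∈ atomOf S ρ}

theorem isDefinablePartition_atomOf_atomProjections {S : Finset (Set (α ⊕ β → M))}
    (hS : ∀ s ∈ S, (M₀ : Set M).Definable L s) :
    IsDefinablePartition L M₀ (atomProjections S).powerset (atomOf (atomProjections S)) :=
  .atomOf fun X hX => by
    obtain ⟨ρ, -, rfl⟩ := Finset.mem_image.1 hX
    exact ((IsDefinablePartition.atomOf hS).definable ρ).exists_sumElim

theorem nonempty_cell_of_glueWeight_ne_zero (hfs : FinitelySatisfiableIn L M₀ mu)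
    {S : Finset (Set (α ⊕ β → M))} (hS : ∀ s ∈ S, (M₀ : Set M).Definable L s)
    {T : Finset (Set (α → M))} (hT : ∀ X ∈ T, (Set.univ : Set M).Definable L X)
    {ρ : Finset (Set (α ⊕ β → M))} {σ t : Finset (Set (α → M))} (hρ : ρ ∈ S.powerset)
    (hw : glueWeight lam mu (atomOf S) (atomOf T) (atomOf (atomProjections S)) (ρ, σ, t) ≠ 0) :
    (atomOf S ρ ∩ cyl Sum.inl (atomOf T σ) ∩ {g | ∀ i, g i ∈ M₀}).Nonempty := by
  classical
  have hR := isDefinablePartition_atomOf_atomProjections M₀ hS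
  obtain ⟨hne, hpos⟩ := glueWeight_ne_zero (.atomOf hT) hR hw
  have hE : {a | ∃ b, Sum.elim a b ∈ atomOf S ρ} ∈ atomProjections S :=
    Finset.mem_image_of_mem _ hρ
  refine exists_mem_inter_cyl_of_finitelySatisfiableIn M₀ hfs
    ((IsDefinablePartition.atomOf hS).definable ρ) ((hR.mono (Set.subset_univ _)).definable t)
    ((IsDefinablePartition.atomOf hT).definable σ) ?_ hne hpos
  by_cases h : {a | ∃ b, Sum.elim a b ∈ atomOf S ρ} ∈ t
  exacts [.inl (atomOf_subset hE h), .inr (atomOf_subset_compl hE h)]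

theorem exists_mem_chargesOn_agree_finset (hfs : FinitelySatisfiableIn L M₀ mu)
    (hlam : ∀ X, (M₀ : Set M).Definable L X → lam.toFun (cyl Sum.inl X) = mu.toFun X)
    {S : Finset (Set (α ⊕ β → M))} (hS : ∀ s ∈ S, (M₀ : Set M).Definable L s)
    {T : Finset (Set (α → M))} (hT : ∀ X ∈ T, (Set.univ : Set M).Definable L X) :
    ∃ y ∈ chargesOn {g : α ⊕ β → M | ∀ i, g i ∈ M₀},
      (∀ s ∈ S, y s = lam.toFun s) ∧ ∀ X ∈ T, y (cyl Sum.inl X) = mu.toFun X := by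
  classical
  have hP := IsDefinablePartition.atomOf hS
  have hQ := IsDefinablePartition.atomOf hT
  have hR := isDefinablePartition_atomOf_atomProjections M₀ hS
  have hrow := sum_glueWeight_left hlam hP hQ hR
  have hcol := sum_glueWeight_right hlam hP hQ hR
  have htotal : ∑ k ∈ S.powerset ×ˢ T.powerset ×ˢ (atomProjections S).powerset,
      glueWeight lam mu (atomOf S) (atomOf T) (atomOf (atomProjections S)) k = 1 := by
    simp only [Finset.sum_product, hrow]
    simpa [lam.measure_univ] using lam.sum_apply_inter hP Set.definable_univ
  obtain ⟨y, hy, hyD⟩ := exists_mem_chargesOn_of_cells (fun k _ => glueWeight_nonneg hP hQ hR k)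
    htotal fun k hk hw => nonempty_cell_of_glueWeight_ne_zero M₀ hfs hS hT
      (Finset.mem_product.1 hk).1 hw
  refine ⟨y, hy, fun s hs => ?_, fun X hX => ?_⟩
  · rw [hyD s (fun k => s ∈ k.1) (fun k _ h => Set.inter_subset_left.trans (atomOf_subset hs h))
      (fun k _ h => Set.inter_subset_left.trans (atomOf_subset_compl hs h)),
      ← lam.sum_ite_atomOf hS hs]
    simp only [Finset.sum_product]
    refine Finset.sum_congr rfl fun ρ _ => ?_
    split_ifs
    exacts [hrow ρ, by simp]
  · rw [hyD (cyl Sum.inl X) (fun k => X ∈ k.2.1)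
      (fun k _ h => Set.inter_subset_right.trans fun g hg => atomOf_subset hX h hg)
      (fun k _ h => Set.inter_subset_right.trans fun g hg => atomOf_subset_compl hX h hg),
      ← mu.sum_ite_atomOf hT hX]
    simp only [Finset.sum_product]
    rw [Finset.sum_comm]
    refine Finset.sum_congr rfl fun σ _ => ?_
    split_ifs
    exacts [hcol σ, by simp]

theorem exists_mem_chargesOn_agree (hfs : FinitelySatisfiableIn L M₀ mu)
    (hlam : ∀ X, (M₀ : Set M).Definable L X → lam.toFun (cyl Sum.inl X) = mu.toFun X) :
    ∃ y ∈ chargesOn {g : α ⊕ β → M | ∀ i, g i ∈ M₀},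
      (∀ s, (M₀ : Set M).Definable L s → y s = lam.toFun s) ∧
      ∀ X, (Set.univ : Set M).Definable L X → y (cyl Sum.inl X) = mu.toFun X := by
  let D : {s : Set (α ⊕ β → M) // (M₀ : Set M).Definable L s} ⊕
      {X : Set (α → M) // (Set.univ : Set M).Definable L X} → Set (α ⊕ β → M) :=
    Sum.elim (↑) fun X => cyl Sum.inl X.1
  obtain ⟨y, hy, hyr⟩ := exists_mem_chargesOn_forall_eq D
    (Sum.elim (fun s => lam.toFun s) fun X => mu.toFun X) fun u => by
      obtain ⟨y, hy, hS, hT⟩ := exists_mem_chargesOn_agree_finset M₀ hfs hlam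
        (S := u.toLeft.image (↑)) (by simp +contextual) (T := u.toRight.image (↑))
        (by simp +contextual)
      refine ⟨y, hy, ?_⟩
      rintro (s | X) hi
      · exact hS _ (Finset.mem_image_of_mem _ (Finset.mem_toLeft.2 hi))
      · exact hT _ (Finset.mem_image_of_mem _ (Finset.mem_toRight.2 hi))
  exact ⟨y, hy, fun s hs => hyr (.inl ⟨s, hs⟩), fun X hX => hyr (.inr ⟨X, hX⟩)⟩

end Stage

/-- Finite satisfiability is preserved under extension domination: if `M₀ ≼ M` is an
elementary substructure, `μ` is finitely satisfiable in `M₀`, and `μ ≥_{E,M₀} ν`,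
then `ν` is finitely satisfiable in `M₀`. -/
theorem finSat_of_extDom {L : FirstOrder.Language} {M : Type*} [L.Structure M]
    (M₀ : L.ElementarySubstructure M) {α β : Type*}
    (mu : KeislerMeasure L M (Set.univ : Set M) α)
    (nu : KeislerMeasure L M (Set.univ : Set M) β)
    (hfs : FinitelySatisfiableIn L (M₀ : Set M) mu)
    (hdom : ExtDomOver L (M₀ : Set M) mu nu) :
    FinitelySatisfiableIn L (M₀ : Set M) nu := by
  obtain ⟨lam, hlam, hext⟩ := hdom
  intro Y hY hpos
  by_contra! hY₀
  obtain ⟨y, hy, hylam, hymu⟩ := exists_mem_chargesOn_agree M₀ hfs hlam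
  let ω : KeislerMeasure L M Set.univ (α ⊕ β) := .ofCharge hy
  have hnu : y (cyl Sum.inr Y) = nu.toFun Y := hext ω ⟨hylam, hymu⟩ Y hY
  have hzero : y (cyl Sum.inr Y) = 0 := hy.2.2.2.2 _ <| Set.disjoint_left.2 fun g hg hgM₀ => by
    obtain ⟨j, hj⟩ := hY₀ _ hg
    exact hj (hgM₀ (Sum.inr j))
  linarith
end
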